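/- Suppose c : ℝ^d × ℝ^d → ℝ is translation invariant, c(x, y) = σ(y − x), with |σ(z)| ≤ M exp(−c|z|) for all z. Then for any bounded measurable f on Q₁, with f_λ(x) := f(λ^{−1/d}x), λ^{−1} ∫_{Q_λ × Q_λ} f_λ(x) f_λ(y) c(x, y) dx dy → (∫_{ℝ^d} σ(z) dz)(∫_{Q₁} f²(u) du) as λ → ∞, provided f is a.e. continuous. -/

import Mathlib

open MeasureTheory Set Filter Topology Module
open scoped Pointwise

/-!
Substituting `x = λ^{1/d} u` and `y = x + z` turns the normalised double integral into
`∫ g u * ∫ g (u + λ^{-1/d} z) σ z dz du` with `g = 1_{Q₁} f`. As `λ → ∞` the inner integral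
tends to `g u * ∫ σ` at every continuity point `u` of `g`; these are almost all points, because
`f` is a.e. continuous on `Q₁` and the boundary of the convex set `Q₁` is null. Since `g` is
bounded and `σ` is integrable by its exponential decay, dominated convergence applies to both
integrals.
-/

/-- The cube `Q_λ = [-λ^{1/d}/2, λ^{1/d}/2]^d` of volume `λ` in `ℝ^d`. -/
def cube (d : ℕ) (lam : ℝ) : Set (EuclideanSpace ℝ (Fin d)) :=
  {x | ∀ i, |x i| ≤ lam ^ ((1:ℝ)/d) / 2}

section
variable {E : Type*} [NormedAddCommGroup E] [NormedSpace ℝ E] [MeasurableSpace E]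

lemma integrable_exp_neg_mul_norm [BorelSpace E] [FiniteDimensional ℝ E] [Nontrivial E]
    (μ : Measure E) [μ.IsAddHaarMeasure] {c : ℝ} (hc : 0 < c) :
    Integrable (fun z => Real.exp (-c * ‖z‖)) μ := by
  refine (integrable_fun_norm_addHaar μ (f := fun t => Real.exp (-c * t))).2 ?_
  have hs : (-1 : ℝ) < (finrank ℝ E - 1 : ℕ) := by
    linarith [(Nat.cast_nonneg _ : (0 : ℝ) ≤ (finrank ℝ E - 1 : ℕ))]
  refine (integrableOn_rpow_mul_exp_neg_mul_rpow hs one_pos hc).congr_fun (fun t _ => ?_)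
    measurableSet_Ioi
  simp [Real.rpow_natCast]

lemma abs_integral_comp_add_smul_mul_le {ν : Measure E} {g σ : E → ℝ} {B : ℝ}
    (hg : ∀ x, |g x| ≤ B) (hσ : Integrable σ ν) (u : E) (s : ℝ) :
    |∫ z, g (u + s • z) * σ z ∂ν| ≤ B * ∫ z, |σ z| ∂ν := by
  rw [← integral_const_mul (μ := ν), ← Real.norm_eq_abs]
  refine norm_integral_le_of_norm_le (hσ.abs.const_mul B) (ae_of_all _ fun z => ?_)
  rw [Real.norm_eq_abs, abs_mul]
  exact mul_le_mul_of_nonneg_right (hg _) (abs_nonneg _)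

variable [BorelSpace E]

lemma tendsto_integral_comp_add_smul_mul {ν : Measure E} {g σ : E → ℝ} {B : ℝ}
    (hgm : Measurable g) (hg : ∀ x, |g x| ≤ B) (hσ : Integrable σ ν) {u : E}
    (hu : ContinuousAt g u) :
    Tendsto (fun s : ℝ => ∫ z, g (u + s • z) * σ z ∂ν) (𝓝 0) (𝓝 (g u * ∫ z, σ z ∂ν)) := by
  rw [← integral_const_mul]
  refine tendsto_integral_filter_of_dominated_convergence (fun z => B * |σ z|)
    (Eventually.of_forall fun s => ((hgm.comp (measurable_const_add u |>.comp
      (measurable_const_smul s))).aestronglyMeasurable.mul hσ.aestronglyMeasurable))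
    (Eventually.of_forall fun s => ae_of_all _ fun z => ?_) (hσ.abs.const_mul B)
    (ae_of_all _ fun z => ?_)
  · rw [Real.norm_eq_abs, abs_mul]
    exact mul_le_mul_of_nonneg_right (hg _) (abs_nonneg _)
  · have hshift : Tendsto (fun s : ℝ => u + s • z) (𝓝 0) (𝓝 u) := by
      simpa using tendsto_const_nhds.add ((tendsto_id (x := 𝓝 (0 : ℝ))).smul_const z)
    exact (hu.tendsto.comp hshift).mul_const _

lemma tendsto_integral_mul_integral_comp_add_smul_mul [SecondCountableTopology E]
    {μ ν : Measure E} [SFinite ν] {g σ : E → ℝ} {B : ℝ}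
    (hgm : Measurable g) (hg : ∀ x, |g x| ≤ B) (hgi : Integrable g μ)
    (hgc : ∀ᵐ x ∂μ, ContinuousAt g x) (hσ : Integrable σ ν) :
    Tendsto (fun s : ℝ => ∫ u, g u * ∫ z, g (u + s • z) * σ z ∂ν ∂μ) (𝓝 0)
      (𝓝 ((∫ z, σ z ∂ν) * ∫ u, g u ^ 2 ∂μ)) := by
  have hlim : (∫ z, σ z ∂ν) * ∫ u, g u ^ 2 ∂μ = ∫ u, g u * (g u * ∫ z, σ z ∂ν) ∂μ := by
    rw [← integral_const_mul]
    congr 1 with u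
    ring
  rw [hlim]
  refine tendsto_integral_filter_of_dominated_convergence
    (fun u => |g u| * (B * ∫ z, |σ z| ∂ν))
    (Eventually.of_forall fun s => hgm.aestronglyMeasurable.mul ?_)
    (Eventually.of_forall fun s => ae_of_all _ fun u => ?_) (hgi.abs.mul_const _) ?_
  · refine AEStronglyMeasurable.integral_prod_right'
      (f := fun p : E × E => g (p.1 + s • p.2) * σ p.2) ?_
    exact (hgm.comp (by fun_prop)).aestronglyMeasurable.mul hσ.aestronglyMeasurable.comp_snd
  · rw [Real.norm_eq_abs, abs_mul]
    exact mul_le_mul_of_nonneg_left (abs_integral_comp_add_smul_mul_le hg hσ u s) (abs_nonneg _)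
  · filter_upwards [hgc] with u hu
    exact (tendsto_integral_comp_add_smul_mul hgm hg hσ hu).const_mul (g u)

variable (μ : Measure E)

lemma setIntegral_smul_set_comp_inv_smul_mul {s : Set E} (hs : MeasurableSet s) {r : ℝ}
    (hr : r ≠ 0) (h k : E → ℝ) :
    ∫ y in r • s, h (r⁻¹ • y) * k y ∂μ = ∫ y, s.indicator h (r⁻¹ • y) * k y ∂μ := by
  rw [← integral_indicator (hs.const_smul₀ r)]
  congr 1 with y
  by_cases hy : r⁻¹ • y ∈ s
  · rw [indicator_of_mem ((mem_smul_set_iff_inv_smul_mem₀ hr _ _).2 hy), indicator_of_mem hy]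
  · rw [indicator_of_notMem (mt (mem_smul_set_iff_inv_smul_mem₀ hr _ _).1 hy),
      indicator_of_notMem hy, zero_mul]

lemma integral_smul_set_smul_set_eq [FiniteDimensional ℝ E] [μ.IsAddHaarMeasure] {s : Set E}
    (hs : MeasurableSet s) {r : ℝ} (hr : 0 < r) (f σ : E → ℝ) :
    ∫ x in r • s, ∫ y in r • s, f (r⁻¹ • x) * f (r⁻¹ • y) * σ (y - x) ∂μ ∂μ
      = r ^ finrank ℝ E *
          ∫ u, s.indicator f u * ∫ z, s.indicator f (u + r⁻¹ • z) * σ z ∂μ ∂μ := by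
  have hinner : ∀ x, ∫ y in r • s, f (r⁻¹ • x) * f (r⁻¹ • y) * σ (y - x) ∂μ
      = f (r⁻¹ • x) * ∫ z, s.indicator f (r⁻¹ • x + r⁻¹ • z) * σ z ∂μ := by
    intro x
    simp_rw [mul_assoc, integral_const_mul, setIntegral_smul_set_comp_inv_smul_mul μ hs hr.ne']
    rw [← integral_add_left_eq_self _ x]
    simp_rw [smul_add, add_sub_cancel_left]
  simp_rw [hinner, setIntegral_smul_set_comp_inv_smul_mul μ hs hr.ne' f]
  rw [Measure.integral_comp_inv_smul_of_nonneg μ (fun u => s.indicator f u *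
    ∫ z, s.indicator f (u + r⁻¹ • z) * σ z ∂μ) hr.le, smul_eq_mul]

end

lemma ae_continuousAt_indicator {X β : Type*} [TopologicalSpace X] [MeasurableSpace X]
    [TopologicalSpace β] [Zero β] {μ : Measure X} {s : Set X} {f : X → β}
    (hs : MeasurableSet s) (hfr : μ (frontier s) = 0)
    (hf : ∀ᵐ x ∂μ.restrict s, ContinuousAt f x) :
    ∀ᵐ x ∂μ, ContinuousAt (s.indicator f) x := by
  filter_upwards [measure_eq_zero_iff_ae_notMem.mp hfr, (ae_restrict_iff' hs).mp hf]
    with x hx hfx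
  rw [← mem_compl_iff, compl_frontier_eq_union_interior] at hx
  rcases hx with hint | hext
  · exact (hfx (interior_subset hint)).congr <| eventuallyEq_iff_exists_mem.mpr
      ⟨interior s, isOpen_interior.mem_nhds hint, (eqOn_indicator.mono interior_subset).symm⟩
  · exact continuousAt_const.congr <| eventuallyEq_iff_exists_mem.mpr
      ⟨interior sᶜ, isOpen_interior.mem_nhds hext,
        fun y hy => (indicator_of_notMem (interior_subset hy) f).symm⟩

lemma cube_eq_preimage_pi (d : ℕ) (lam : ℝ) :
    cube d lam = EuclideanSpace.equiv (Fin d) ℝ ⁻¹'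
      univ.pi fun _ => Icc (-(lam ^ ((1:ℝ)/d) / 2)) (lam ^ ((1:ℝ)/d) / 2) := by
  ext x
  simp only [cube, mem_ofPred_eq, mem_preimage, mem_univ_pi, mem_Icc, abs_le]
  rfl

lemma isCompact_cube (d : ℕ) (lam : ℝ) : IsCompact (cube d lam) := by
  rw [cube_eq_preimage_pi]
  exact (EuclideanSpace.equiv (Fin d) ℝ).toHomeomorph.isCompact_preimage.2
    (isCompact_univ_pi fun _ => isCompact_Icc)

lemma convex_cube (d : ℕ) (lam : ℝ) : Convex ℝ (cube d lam) := by
  rw [cube_eq_preimage_pi]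
  exact (convex_pi fun _ _ => convex_Icc _ _).linear_preimage
    (EuclideanSpace.equiv (Fin d) ℝ).toLinearMap

lemma cube_eq_smul (d : ℕ) {lam : ℝ} (hlam : 0 < lam) :
    cube d lam = lam ^ ((1:ℝ)/d) • cube d 1 := by
  have hr : 0 < lam ^ ((1:ℝ)/d) := Real.rpow_pos_of_pos hlam _
  ext x
  simp only [mem_smul_set_iff_inv_smul_mem₀ hr.ne', cube, mem_ofPred_eq, Real.one_rpow,
    PiLp.smul_apply, smul_eq_mul, abs_mul, abs_inv, abs_of_pos hr]
  refine forall_congr' fun i => ?_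
  rw [inv_mul_le_iff₀ hr]
  ring_nf

lemma inv_mul_integral_cube_cube_eq {d : ℕ} (hd : 1 ≤ d) (f σ : EuclideanSpace ℝ (Fin d) → ℝ)
    {lam : ℝ} (hlam : 0 < lam) :
    lam⁻¹ * ∫ x in cube d lam, ∫ y in cube d lam,
        f (lam ^ (-(1:ℝ)/d) • x) * f (lam ^ (-(1:ℝ)/d) • y) * σ (y - x)
      = ∫ u, (cube d 1).indicator f u *
          ∫ z, (cube d 1).indicator f (u + (lam ^ ((1:ℝ)/d))⁻¹ • z) * σ z := by
  have hr : 0 < lam ^ ((1:ℝ)/d) := Real.rpow_pos_of_pos hlam _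
  have hrd : (lam ^ ((1:ℝ)/d)) ^ d = lam := by
    rw [← Real.rpow_natCast, ← Real.rpow_mul hlam.le, one_div_mul_cancel (by positivity),
      Real.rpow_one]
  rw [neg_div, Real.rpow_neg hlam.le, cube_eq_smul d hlam,
    integral_smul_set_smul_set_eq volume (isCompact_cube d 1).measurableSet hr,
    finrank_euclideanSpace_fin, hrd, inv_mul_cancel_left₀ hlam.ne']

theorem two_point_correlation_scaling_limit_general {d : ℕ} (hd : 1 ≤ d)
    (σ : EuclideanSpace ℝ (Fin d) → ℝ) (hσmeas : Measurable σ)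
    (M c : ℝ) (hc : 0 < c)
    (hσdecay : ∀ z, |σ z| ≤ M * Real.exp (-c * ‖z‖))
    (f : EuclideanSpace ℝ (Fin d) → ℝ) (hfmeas : Measurable f)
    (hfbd : ∃ B, ∀ x ∈ cube d 1, |f x| ≤ B)
    (hfcont : ∀ᵐ x ∂(volume.restrict (cube d 1)), ContinuousAt f x) :
    Filter.Tendsto
      (fun lam : ℝ => lam⁻¹ *
        ∫ x in cube d lam, ∫ y in cube d lam,
          f ((lam ^ (-(1:ℝ)/d)) • x) * f ((lam ^ (-(1:ℝ)/d)) • y) * σ (y - x))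
      Filter.atTop
      (nhds ((∫ z, σ z) * ∫ u in cube d 1, f u ^ 2)) := by
  obtain ⟨B, hB⟩ := hfbd
  have : Nonempty (Fin d) := ⟨⟨0, hd⟩⟩
  have hQ : MeasurableSet (cube d 1) := (isCompact_cube d 1).measurableSet
  set g := (cube d 1).indicator f
  have hσint : Integrable σ := ((integrable_exp_neg_mul_norm volume hc).const_mul M).mono'
    hσmeas.aestronglyMeasurable (ae_of_all _ hσdecay)
  have hgB : ∀ x, |g x| ≤ |B| := fun x => by
    by_cases hx : x ∈ cube d 1
    · simpa [g, hx] using (hB x hx).trans (le_abs_self B)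
    · simp [g, hx]
  have hgint : Integrable g := (IntegrableOn.of_bound (isCompact_cube d 1).measure_lt_top
    hfmeas.aestronglyMeasurable B ((ae_restrict_iff' hQ).2 (ae_of_all _ hB))).integrable_indicator hQ
  have hgcont : ∀ᵐ x, ContinuousAt g x :=
    ae_continuousAt_indicator hQ ((convex_cube d 1).addHaar_frontier volume) hfcont
  have hgsq : ∫ u, g u ^ 2 = ∫ u in cube d 1, f u ^ 2 := by
    rw [← integral_indicator hQ]
    congr 1 with u
    by_cases hu : u ∈ cube d 1 <;> simp [g, hu]
  have hscale : Tendsto (fun lam : ℝ => (lam ^ ((1:ℝ)/d))⁻¹) atTop (𝓝 0) :=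
    (tendsto_rpow_atTop (by positivity)).inv_tendsto_atTop
  rw [← hgsq]
  refine ((tendsto_integral_mul_integral_comp_add_smul_mul (hfmeas.indicator hQ) hgB hgint
    hgcont hσint).comp hscale).congr' ?_
  filter_upwards [eventually_gt_atTop 0] with lam hlam
  exact (inv_mul_integral_cube_cube_eq hd f σ hlam).symm

/-- If the two-point correlation `c(x,y) = σ(y-x)` is translation invariant
with exponentially decaying `σ`, then for bounded measurable a.e.-continuous `f` on `Q₁`,
`λ^{-1} ∫_{Q_λ×Q_λ} f_λ(x) f_λ(y) c(x,y) dx dy → (∫ σ)(∫_{Q₁} f²)` as `λ → ∞`. -/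
theorem two_point_correlation_scaling_limit {d : ℕ} (hd : 1 ≤ d)
    (σ : EuclideanSpace ℝ (Fin d) → ℝ) (hσmeas : Measurable σ)
    (M c : ℝ) (hM : 0 < M) (hc : 0 < c)
    (hσdecay : ∀ z, |σ z| ≤ M * Real.exp (-c * ‖z‖))
    (f : EuclideanSpace ℝ (Fin d) → ℝ) (hfmeas : Measurable f)
    (hfbd : ∃ B, ∀ x ∈ cube d 1, |f x| ≤ B)
    (hfcont : ∀ᵐ x ∂(volume.restrict (cube d 1)), ContinuousAt f x) :
    Filter.Tendsto
      (fun lam : ℝ => lam⁻¹ *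
        ∫ x in cube d lam, ∫ y in cube d lam,
          f ((lam ^ (-(1:ℝ)/d)) • x) * f ((lam ^ (-(1:ℝ)/d)) • y) * σ (y - x))
      Filter.atTop
      (nhds ((∫ z, σ z) * ∫ u in cube d 1, f u ^ 2)) :=
  two_point_correlation_scaling_limit_general hd σ hσmeas M c hc hσdecay f hfmeas hfbd hfcont
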